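/- arXiv:1810.01700 — 2 statements merged into one kernel-verified Lean document; each statement's English description precedes it below -/
import Mathlib

section
/- Let $\nu$ be a probability measure on a Banach space and $\varphi \mapsto \|\varphi\|$ a measurable norm-like functional. Suppose there exist $\alpha \in (0,1)$ and $\beta > 0$ such that $\int e^{\beta (1+\|\varphi\|^2)^{\alpha/2}}\, \nu(d\varphi) < \infty$. Then there exists a constant $K > 0$ such that for all $n \in \mathbb{N}$, $\int \|\varphi\|^n \, \nu(d\varphi) \le K^n (n!)^{1/\alpha} \int e^{\beta(1+\|\varphi\|^2)^{\alpha/2}}\,\nu(d\varphi)$. -/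
/-!
Raising the claimed bound to the power `α` turns it into the Taylor estimate
`(α β y)^n / n! ≤ exp (α β y)` for `y = ⟨φ⟩^α`, since `‖φ‖^n ≤ ⟨φ⟩^n = y^(n/α)`.
Integrating this pointwise bound gives the moment estimate with `K = (α β)^(-1/α)`.
-/

open MeasureTheory Real
open scoped ENNReal

lemma rpow_natCast_div_le_mul_exp {α β y : ℝ} (hα : 0 < α) (hβ : 0 < β) (hy : 0 ≤ y) (n : ℕ) :
    y ^ ((n : ℝ) / α) ≤ ((α * β)⁻¹ ^ (1 / α)) ^ n * (n.factorial : ℝ) ^ (1 / α) * exp (β * y) := by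
  have hαβ : 0 < α * β := mul_pos hα hβ
  have htaylor : y ^ n ≤ (α * β)⁻¹ ^ n * n.factorial * exp (α * β * y) := by
    have h := pow_div_factorial_le_exp _ (mul_nonneg hαβ.le hy) n
    rw [div_le_iff₀ (by positivity), mul_pow] at h
    rw [inv_pow, mul_assoc, le_inv_mul_iff₀ (by positivity)]
    linarith
  calc y ^ ((n : ℝ) / α) = (y ^ n) ^ (1 / α) := by
        rw [← rpow_natCast, ← rpow_mul hy, mul_one_div]
    _ ≤ ((α * β)⁻¹ ^ n * n.factorial * exp (α * β * y)) ^ (1 / α) :=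
        rpow_le_rpow (by positivity) htaylor (by positivity)
    _ = ((α * β)⁻¹ ^ (1 / α)) ^ n * (n.factorial : ℝ) ^ (1 / α) * exp (β * y) := by
        rw [mul_rpow (by positivity) (by positivity), mul_rpow (by positivity) (by positivity),
          ← rpow_pow_comm (by positivity), ← exp_mul]
        congr 2
        field_simp

lemma pow_le_mul_exp_one_add_sq_rpow {α β : ℝ} (hα : 0 < α) (hβ : 0 < β) (x : ℝ) (n : ℕ) :
    x ^ n ≤ ((α * β)⁻¹ ^ (1 / α)) ^ n * (n.factorial : ℝ) ^ (1 / α) *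
      exp (β * (1 + x ^ 2) ^ (α / 2)) := by
  have hbracket : 0 ≤ 1 + x ^ 2 := by positivity
  calc x ^ n ≤ |x| ^ n := (le_abs_self _).trans (abs_pow x n).le
    _ ≤ √(1 + x ^ 2) ^ n :=
        pow_le_pow_left₀ (abs_nonneg x) (abs_le_sqrt (by linarith [sq_abs x])) n
    _ = ((1 + x ^ 2) ^ (α / 2)) ^ ((n : ℝ) / α) := by
        rw [sqrt_eq_rpow, ← rpow_natCast, ← rpow_mul hbracket, ← rpow_mul hbracket]
        congr 1
        field_simp
    _ ≤ _ := rpow_natCast_div_le_mul_exp hα hβ (by positivity) n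

theorem stmt5_general {E : Type*} [MeasurableSpace E]
    (ν : Measure E)
    (N : E → ℝ)
    (α β : ℝ) (hα : α ∈ Set.Ioo (0:ℝ) 1) (hβ : 0 < β)
    (hint : Integrable (fun φ => Real.exp (β * (1 + N φ ^ 2) ^ (α / 2))) ν) :
    ∃ K > 0, ∀ n : ℕ,
      (∫⁻ φ, ENNReal.ofReal (N φ ^ n) ∂ν) ≤
        ENNReal.ofReal (K ^ n * (n.factorial : ℝ) ^ ((1:ℝ) / α) *
          ∫ φ, Real.exp (β * (1 + N φ ^ 2) ^ (α / 2)) ∂ν) := by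
  obtain ⟨hα0, -⟩ := hα
  refine ⟨(α * β)⁻¹ ^ (1 / α), by positivity, fun n => ?_⟩
  have hC : 0 ≤ ((α * β)⁻¹ ^ (1 / α)) ^ n * (n.factorial : ℝ) ^ (1 / α) := by positivity
  calc (∫⁻ φ, ENNReal.ofReal (N φ ^ n) ∂ν)
      ≤ ∫⁻ φ, ENNReal.ofReal (((α * β)⁻¹ ^ (1 / α)) ^ n * (n.factorial : ℝ) ^ (1 / α)) *
          ENNReal.ofReal (exp (β * (1 + N φ ^ 2) ^ (α / 2))) ∂ν :=
        lintegral_mono fun φ => by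
          rw [← ENNReal.ofReal_mul hC]
          exact ENNReal.ofReal_le_ofReal (pow_le_mul_exp_one_add_sq_rpow hα0 hβ (N φ) n)
    _ = _ := by
        rw [lintegral_const_mul' _ _ ENNReal.ofReal_ne_top,
          ← ofReal_integral_eq_lintegral_ofReal hint (ae_of_all _ fun _ => (exp_pos _).le),
          ← ENNReal.ofReal_mul hC]

/-- Stretched exponential integrability implies factorial moment bounds:
if `∫ exp(β (1+N φ²)^{α/2}) dν < ∞` for some `α ∈ (0,1)`, `β > 0`, then
`∫ N^n dν ≤ K^n (n!)^{1/α} ∫ exp(β (1+N φ²)^{α/2}) dν` for some `K > 0`. -/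
theorem stmt5 {E : Type*} [NormedAddCommGroup E] [MeasurableSpace E]
    (ν : Measure E) [IsProbabilityMeasure ν]
    (N : E → ℝ) (hNmeas : Measurable N) (hN0 : ∀ φ, 0 ≤ N φ)
    (α β : ℝ) (hα : α ∈ Set.Ioo (0:ℝ) 1) (hβ : 0 < β)
    (hint : Integrable (fun φ => Real.exp (β * (1 + N φ ^ 2) ^ (α / 2))) ν) :
    ∃ K > 0, ∀ n : ℕ,
      (∫⁻ φ, ENNReal.ofReal (N φ ^ n) ∂ν) ≤
        ENNReal.ofReal (K ^ n * (n.factorial : ℝ) ^ ((1:ℝ) / α) *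
          ∫ φ, Real.exp (β * (1 + N φ ^ 2) ^ (α / 2)) ∂ν) :=
  stmt5_general ν N α β hα hβ hint
end

section
/- Let $\mu$ be a probability measure on a topological vector space $V$ of distributions, and suppose there exist $\beta > 0$ and a measurable functional $\|\cdot\|$ with $\int e^{\beta\|\varphi\|^{\alpha}}\mu(d\varphi) < \infty$ for some $\alpha \in (0,1)$, and that for continuous linear functionals $f$ one has $|\varphi(f)| \le \|\varphi\| \cdot \|f\|_s$ for a fixed norm $\|\cdot\|_s$. Then the moment functionals $S_n(f_1\otimes\cdots\otimes f_n) := \int \varphi(f_1)\cdots\varphi(f_n)\,\mu(d\varphi)$ are well-defined and satisfy $|S_n(f_1\otimes\cdots\otimes f_n)| \le K^n (n!)^{1/\alpha}\prod_{i=1}^n \|f_i\|_s$ for some constant $K$. -/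
/-!
Put `t = ‖φ‖^α`. The exponential series gives `(αβ t)^n ≤ n! e^{αβ t}`, and taking `α`-th roots
turns this into the pointwise bound `‖φ‖^n ≤ ((αβ)^{-1/α})^n (n!)^{1/α} e^{β‖φ‖^α}`. Since
`|φ(f₁)⋯φ(fₙ)| ≤ ‖φ‖^n ∏ ‖fᵢ‖ₛ`, the moment integrand is dominated by a multiple of the integrable
function `e^{β‖φ‖^α}`; as `μ` is a probability measure, `∫ e^{β‖φ‖^α} dμ ≥ 1` can be absorbed
into `K^n` for `n ≥ 1`.
-/

open MeasureTheory

theorem pow_le_factorial_rpow_mul_exp {α β x : ℝ} (hα : 0 < α) (hβ : 0 < β) (hx : 0 ≤ x)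
    (n : ℕ) :
    x ^ n ≤ ((α * β)⁻¹ ^ (1 / α)) ^ n * (n.factorial : ℝ) ^ (1 / α) * Real.exp (β * x ^ α) := by
  have hexp_series : (x ^ α) ^ n ≤ (α * β)⁻¹ ^ n * n.factorial * Real.exp (α * β * x ^ α) := by
    have h := Real.pow_div_factorial_le_exp (x := α * β * x ^ α) (by positivity) n
    rw [div_le_iff₀ (by positivity), mul_pow] at h
    rw [inv_pow, inv_mul_eq_div, div_mul_eq_mul_div, le_div_iff₀' (by positivity)]
    linarith
  calc x ^ n = ((x ^ α) ^ n) ^ (1 / α) := by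
        rw [Real.rpow_pow_comm hx, one_div, Real.rpow_rpow_inv (pow_nonneg hx n) hα.ne']
    _ ≤ ((α * β)⁻¹ ^ n * n.factorial * Real.exp (α * β * x ^ α)) ^ (1 / α) :=
        Real.rpow_le_rpow (by positivity) hexp_series (by positivity)
    _ = _ := by
        rw [Real.mul_rpow (by positivity) (by positivity),
          Real.mul_rpow (by positivity) (by positivity), ← Real.rpow_pow_comm (by positivity),
          ← Real.exp_mul]
        field_simp

theorem abs_prod_le_pow_mul_prod {ι : Type*} (s : Finset ι) {b a : ι → ℝ} {c : ℝ}
    (h : ∀ i ∈ s, |b i| ≤ c * a i) :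
    |∏ i ∈ s, b i| ≤ c ^ s.card * ∏ i ∈ s, a i := by
  rw [Finset.abs_prod, ← Finset.prod_const, ← Finset.prod_mul_distrib]
  exact Finset.prod_le_prod (fun i _ => abs_nonneg _) h

theorem one_le_integral_of_one_le {Ω : Type*} [MeasurableSpace Ω] {μ : Measure Ω}
    [IsProbabilityMeasure μ] {g : Ω → ℝ} (hg : Integrable g μ) (h : ∀ ω, 1 ≤ g ω) :
    1 ≤ ∫ ω, g ω ∂μ := by
  simpa using integral_mono (integrable_const 1) hg h

section Moments

variable {V E : Type*} [NormedAddCommGroup E] {B : V → E → ℝ} {N : V → ℝ} {α β : ℝ}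

theorem abs_prod_le_mul_exp_rpow (hN0 : ∀ φ, 0 ≤ N φ) (hα : 0 < α) (hβ : 0 < β)
    (hpair : ∀ φ f, |B φ f| ≤ N φ * ‖f‖) {n : ℕ} (f : Fin n → E) (φ : V) :
    |∏ i, B φ (f i)| ≤
      ((α * β)⁻¹ ^ (1 / α)) ^ n * (n.factorial : ℝ) ^ (1 / α) * (∏ i, ‖f i‖) *
        Real.exp (β * N φ ^ α) :=
  calc |∏ i, B φ (f i)| ≤ N φ ^ n * ∏ i, ‖f i‖ := by
        simpa using abs_prod_le_pow_mul_prod Finset.univ fun i _ => hpair φ (f i)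
    _ ≤ (((α * β)⁻¹ ^ (1 / α)) ^ n * (n.factorial : ℝ) ^ (1 / α) * Real.exp (β * N φ ^ α)) *
          ∏ i, ‖f i‖ := by
        gcongr
        exact pow_le_factorial_rpow_mul_exp hα hβ (hN0 φ) n
    _ = _ := by ring

theorem integrable_prod_and_abs_integral_le [MeasurableSpace V] {μ : Measure V}
    (hB : ∀ f, Measurable fun φ => B φ f) (hN0 : ∀ φ, 0 ≤ N φ) (hα : 0 < α) (hβ : 0 < β)
    (hexp : Integrable (fun φ => Real.exp (β * N φ ^ α)) μ)
    (hpair : ∀ φ f, |B φ f| ≤ N φ * ‖f‖) {n : ℕ} (f : Fin n → E) :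
    Integrable (fun φ => ∏ i, B φ (f i)) μ ∧
      |∫ φ, ∏ i, B φ (f i) ∂μ| ≤
        ((α * β)⁻¹ ^ (1 / α)) ^ n * (n.factorial : ℝ) ^ (1 / α) * (∏ i, ‖f i‖) *
          ∫ φ, Real.exp (β * N φ ^ α) ∂μ := by
  have hdom : ∀ᵐ φ ∂μ, ‖∏ i, B φ (f i)‖ ≤ _ :=
    ae_of_all _ (abs_prod_le_mul_exp_rpow hN0 hα hβ hpair f)
  refine ⟨(hexp.const_mul _).mono'
    (Finset.measurable_prod _ fun i _ => hB (f i)).aestronglyMeasurable hdom, ?_⟩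
  rw [← integral_const_mul]
  exact norm_integral_le_of_norm_le (hexp.const_mul _) hdom

end Moments

theorem stmt17_general {V : Type*} [MeasurableSpace V] {E : Type*} [NormedAddCommGroup E]
    (μ : Measure V) [IsProbabilityMeasure μ]
    (B : V → E → ℝ) (hB : ∀ f, Measurable fun φ => B φ f)
    (N : V → ℝ) (hN0 : ∀ φ, 0 ≤ N φ)
    (α β : ℝ) (hα : α ∈ Set.Ioo (0:ℝ) 1) (hβ : 0 < β)
    (hexp : Integrable (fun φ => Real.exp (β * N φ ^ α)) μ)
    (hpair : ∀ φ f, |B φ f| ≤ N φ * ‖f‖) :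
    ∃ K > 0, ∀ (n : ℕ) (f : Fin n → E),
      Integrable (fun φ => ∏ i, B φ (f i)) μ ∧
      |∫ φ, ∏ i, B φ (f i) ∂μ| ≤
        K ^ n * (n.factorial : ℝ) ^ ((1:ℝ) / α) * ∏ i, ‖f i‖ := by
  obtain ⟨hα0, -⟩ := hα
  set C := (α * β)⁻¹ ^ (1 / α)
  set I := ∫ φ, Real.exp (β * N φ ^ α) ∂μ
  have hI : 1 ≤ I := one_le_integral_of_one_le hexp fun φ =>
    Real.one_le_exp (mul_nonneg hβ.le (Real.rpow_nonneg (hN0 φ) α))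
  refine ⟨C * I, mul_pos (by positivity) (by linarith), fun n f => ?_⟩
  obtain ⟨hint, hbound⟩ := integrable_prod_and_abs_integral_le hB hN0 hα0 hβ hexp hpair f
  refine ⟨hint, ?_⟩
  rcases Nat.eq_zero_or_pos n with rfl | hn
  · simp
  calc |∫ φ, ∏ i, B φ (f i) ∂μ|
      ≤ C ^ n * I * ((n.factorial : ℝ) ^ (1 / α) * ∏ i, ‖f i‖) := hbound.trans_eq (by ring)
    _ ≤ C ^ n * I ^ n * ((n.factorial : ℝ) ^ (1 / α) * ∏ i, ‖f i‖) := by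
        gcongr
        exact le_self_pow₀ hI hn.ne'
    _ = (C * I) ^ n * (n.factorial : ℝ) ^ (1 / α) * ∏ i, ‖f i‖ := by ring

/-- OS0 from stretched exponential integrability: if `|φ(f)| ≤ N(φ)‖f‖ₛ` and
`∫ e^{β N^α} dμ < ∞` for some `α ∈ (0,1)`, `β > 0`, then the moment functionals
`Sₙ(f₁⊗⋯⊗fₙ) = ∫ φ(f₁)⋯φ(fₙ) dμ` are well-defined and satisfy
`|Sₙ| ≤ Kⁿ (n!)^{1/α} ∏ ‖fᵢ‖ₛ`. -/
theorem stmt17 {V : Type*} [MeasurableSpace V] {E : Type*} [NormedAddCommGroup E]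
    (μ : Measure V) [IsProbabilityMeasure μ]
    (B : V → E → ℝ) (hB : ∀ f, Measurable fun φ => B φ f)
    (N : V → ℝ) (hNmeas : Measurable N) (hN0 : ∀ φ, 0 ≤ N φ)
    (α β : ℝ) (hα : α ∈ Set.Ioo (0:ℝ) 1) (hβ : 0 < β)
    (hexp : Integrable (fun φ => Real.exp (β * N φ ^ α)) μ)
    (hpair : ∀ φ f, |B φ f| ≤ N φ * ‖f‖) :
    ∃ K > 0, ∀ (n : ℕ) (f : Fin n → E),
      Integrable (fun φ => ∏ i, B φ (f i)) μ ∧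
      |∫ φ, ∏ i, B φ (f i) ∂μ| ≤
        K ^ n * (n.factorial : ℝ) ^ ((1:ℝ) / α) * ∏ i, ‖f i‖ :=
  stmt17_general μ B hB N hN0 α β hα hβ hexp hpair
end
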